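/- Let X ∈ M_n(ℂ) with W(X) ⊂ S_{α₁} and Y ∈ M_n(ℂ) with W(Y) ⊂ S_{α₂}, α₁, α₂ ∈ [0, π/2). Then ω(X ∘ Y) ≤ min{ (1 + tan α₁) ω(Re X) ω(Y), (1 + tan α₂) ω(X) ω(Re Y) }. -/

import Mathlib

/-!
Write `X = Re X + i Im X` with `Re X`, `Im X` Hermitian. On a unit vector `x`, `⟪Xx, x⟫` has real
part `⟪(Re X)x, x⟫` and imaginary part `⟪(Im X)x, x⟫`, so the sector condition gives
`ω(Im X) ≤ tan α · ω(Re X)`. For Hermitian `A = ∑ λₖ uₖuₖ*` one has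
`⟪(A ∘ Y)x, x⟫ = ∑ λₖ ⟪Y wₖ, wₖ⟫` with `wₖ = ūₖ ∘ x` and `∑ ‖wₖ‖² = ‖x‖²`, hence
`ω(A ∘ Y) ≤ ω(A) ω(Y)`. The triangle inequality for `ω` then bounds `ω(X ∘ Y)` by
`(1 + tan α₁) ω(Re X) ω(Y)`, and the second bound follows since `∘` is commutative.
-/

open Matrix Complex
open scoped ComplexOrder

/-- Hermitian real part `(X + Xᴴ)/2`. -/
noncomputable def reM {m : ℕ} (X : Matrix (Fin m) (Fin m) ℂ) : Matrix (Fin m) (Fin m) ℂ :=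
  (1 / 2 : ℂ) • (X + Xᴴ)

/-- Hermitian imaginary part `(X - Xᴴ)/(2i)`. -/
noncomputable def imM {m : ℕ} (X : Matrix (Fin m) (Fin m) ℂ) : Matrix (Fin m) (Fin m) ℂ :=
  (-Complex.I / 2) • (X - Xᴴ)

/-- Numerical range `W(X) = {⟨Xx, x⟩ : ‖x‖ = 1}`. -/
noncomputable def numRange {m : ℕ} (X : Matrix (Fin m) (Fin m) ℂ) : Set ℂ :=
  {z | ∃ x : EuclideanSpace ℂ (Fin m), ‖x‖ = 1 ∧ z = star (x : Fin m → ℂ) ⬝ᵥ X.mulVec x}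

/-- Numerical radius `ω(X) = sup {|z| : z ∈ W(X)}`. -/
noncomputable def numRadius {m : ℕ} (X : Matrix (Fin m) (Fin m) ℂ) : ℝ :=
  sSup ((fun z : ℂ => ‖z‖) '' numRange X)

/-- The sector `S_α`. -/
def sector (α : ℝ) : Set ℂ := {z : ℂ | 0 < z.re ∧ |z.im| ≤ Real.tan α * z.re}

/-- Operator norm of a matrix acting on Euclidean space. -/
noncomputable def opNorm {m : ℕ} (X : Matrix (Fin m) (Fin m) ℂ) : ℝ :=
  ‖Matrix.toEuclideanCLM (𝕜 := ℂ) X‖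

section NumericalRadius

variable {m : ℕ}

lemma norm_star_dotProduct_mulVec_le_opNorm (M : Matrix (Fin m) (Fin m) ℂ)
    {x : EuclideanSpace ℂ (Fin m)} (hx : ‖x‖ = 1) :
    ‖star ⇑x ⬝ᵥ M *ᵥ ⇑x‖ ≤ opNorm M := by
  have hinner : star ⇑x ⬝ᵥ M *ᵥ ⇑x = inner ℂ x (toEuclideanCLM (𝕜 := ℂ) M x) := by
    rw [EuclideanSpace.inner_eq_star_dotProduct, ofLp_toEuclideanCLM, dotProduct_comm]
  calc ‖star ⇑x ⬝ᵥ M *ᵥ ⇑x‖ ≤ ‖x‖ * ‖toEuclideanCLM (𝕜 := ℂ) M x‖ := by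
        rw [hinner]; exact norm_inner_le_norm _ _
    _ ≤ opNorm M := by
        simpa [hx, opNorm] using (toEuclideanCLM (𝕜 := ℂ) M).le_opNorm x

lemma bddAbove_norm_numRange (M : Matrix (Fin m) (Fin m) ℂ) :
    BddAbove ((fun z : ℂ => ‖z‖) '' numRange M) := by
  refine ⟨opNorm M, ?_⟩
  rintro _ ⟨_, ⟨x, hx, rfl⟩, rfl⟩
  exact norm_star_dotProduct_mulVec_le_opNorm M hx

lemma numRadius_nonneg (M : Matrix (Fin m) (Fin m) ℂ) : 0 ≤ numRadius M :=
  Real.sSup_nonneg (by rintro _ ⟨z, _, rfl⟩; exact norm_nonneg z)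

lemma norm_star_dotProduct_mulVec_le_numRadius (M : Matrix (Fin m) (Fin m) ℂ)
    {x : EuclideanSpace ℂ (Fin m)} (hx : ‖x‖ = 1) :
    ‖star ⇑x ⬝ᵥ M *ᵥ ⇑x‖ ≤ numRadius M :=
  le_csSup (bddAbove_norm_numRange M) ⟨_, ⟨x, hx, rfl⟩, rfl⟩

lemma numRadius_le_of_forall {M : Matrix (Fin m) (Fin m) ℂ} {c : ℝ} (hc : 0 ≤ c)
    (h : ∀ x : EuclideanSpace ℂ (Fin m), ‖x‖ = 1 → ‖star ⇑x ⬝ᵥ M *ᵥ ⇑x‖ ≤ c) :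
    numRadius M ≤ c := by
  refine Real.sSup_le ?_ hc
  rintro _ ⟨_, ⟨x, hx, rfl⟩, rfl⟩
  exact h x hx

lemma norm_star_dotProduct_mulVec_le_numRadius_mul (M : Matrix (Fin m) (Fin m) ℂ)
    (x : EuclideanSpace ℂ (Fin m)) :
    ‖star ⇑x ⬝ᵥ M *ᵥ ⇑x‖ ≤ numRadius M * ‖x‖ ^ 2 := by
  rcases eq_or_ne x 0 with rfl | hx
  · simp
  have hunit := norm_star_dotProduct_mulVec_le_numRadius M (norm_smul_inv_norm (𝕜 := ℂ) hx)
  simp only [WithLp.ofLp_smul, star_smul, mulVec_smul, dotProduct_smul, smul_dotProduct,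
    smul_eq_mul, norm_mul, norm_star, norm_inv, RCLike.norm_ofReal, abs_norm, ← mul_assoc,
    ← sq, inv_pow] at hunit
  have hpos : 0 < ‖x‖ ^ 2 := by positivity
  rwa [inv_mul_le_iff₀ hpos, mul_comm] at hunit

lemma numRadius_add_le (M N : Matrix (Fin m) (Fin m) ℂ) :
    numRadius (M + N) ≤ numRadius M + numRadius N :=
  numRadius_le_of_forall (add_nonneg (numRadius_nonneg M) (numRadius_nonneg N)) fun x hx => by
    rw [add_mulVec, dotProduct_add]
    exact (norm_add_le _ _).trans (add_le_add (norm_star_dotProduct_mulVec_le_numRadius M hx)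
      (norm_star_dotProduct_mulVec_le_numRadius N hx))

lemma numRadius_smul_le (c : ℂ) (M : Matrix (Fin m) (Fin m) ℂ) :
    numRadius (c • M) ≤ ‖c‖ * numRadius M :=
  numRadius_le_of_forall (mul_nonneg (norm_nonneg c) (numRadius_nonneg M)) fun x hx => by
    rw [smul_mulVec, dotProduct_smul, norm_smul]
    exact mul_le_mul_of_nonneg_left (norm_star_dotProduct_mulVec_le_numRadius M hx) (norm_nonneg c)

end NumericalRadius

lemma Matrix.sum_hadamard {ι n : Type*} [Fintype ι] {α : Type*} [NonUnitalNonAssocSemiring α]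
    (A : ι → Matrix n n α) (Y : Matrix n n α) : (∑ k, A k) ⊙ Y = ∑ k, A k ⊙ Y := by
  ext i j
  simp only [hadamard_apply, Matrix.sum_apply, Finset.sum_mul]

lemma Matrix.star_dotProduct_vecMulVec_hadamard_mulVec {n α : Type*} [Fintype n] [CommRing α]
    [StarRing α] (u x : n → α) (Y : Matrix n n α) :
    star x ⬝ᵥ (vecMulVec u (star u) ⊙ Y) *ᵥ x = star (star u * x) ⬝ᵥ Y *ᵥ (star u * x) := by
  simp only [dotProduct, mulVec, hadamard_apply, vecMulVec_apply, Finset.mul_sum, Pi.mul_apply,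
    Pi.star_apply, star_mul', star_star]
  refine Finset.sum_congr rfl fun i _ => Finset.sum_congr rfl fun j _ => ?_
  ring

lemma OrthonormalBasis.sum_norm_sq_apply {ι n 𝕜 : Type*} [RCLike 𝕜] [Fintype ι] [Fintype n]
    [DecidableEq n] (b : OrthonormalBasis ι 𝕜 (EuclideanSpace 𝕜 n)) (j : n) :
    ∑ k, ‖b k j‖ ^ 2 = 1 := by
  simpa [EuclideanSpace.inner_single_right] using
    b.sum_sq_norm_inner_right (EuclideanSpace.single j 1)

lemma Matrix.IsHermitian.eq_sum_eigenvalues_smul_vecMulVec {n 𝕜 : Type*} [RCLike 𝕜] [Fintype n]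
    [DecidableEq n] {A : Matrix n n 𝕜} (hA : A.IsHermitian) :
    A = ∑ k, (hA.eigenvalues k : 𝕜) •
      vecMulVec ⇑(hA.eigenvectorBasis k) (star ⇑(hA.eigenvectorBasis k)) := by
  ext i j
  conv_lhs => rw [hA.spectral_theorem]
  rw [Unitary.conjStarAlgAut_apply, Matrix.mul_apply, Matrix.sum_apply]
  refine Finset.sum_congr rfl fun k _ => ?_
  simp only [mul_diagonal, eigenvectorUnitary_apply, Function.comp_apply, star_apply,
    RCLike.star_def, smul_apply, vecMulVec_apply, Pi.star_apply, smul_eq_mul]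
  ring

lemma Matrix.IsHermitian.abs_eigenvalues_le_numRadius {m : ℕ} {A : Matrix (Fin m) (Fin m) ℂ}
    (hA : A.IsHermitian) (k : Fin m) : |hA.eigenvalues k| ≤ numRadius A := by
  rw [hA.eigenvalues_eq]
  exact (RCLike.abs_re_le_norm _).trans
    (norm_star_dotProduct_mulVec_le_numRadius A (hA.eigenvectorBasis.orthonormal.1 k))

lemma Matrix.IsHermitian.numRadius_hadamard_le {m : ℕ} {A : Matrix (Fin m) (Fin m) ℂ}
    (hA : A.IsHermitian) (Y : Matrix (Fin m) (Fin m) ℂ) :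
    numRadius (A ⊙ Y) ≤ numRadius A * numRadius Y := by
  set b := hA.eigenvectorBasis
  refine numRadius_le_of_forall (mul_nonneg (numRadius_nonneg A) (numRadius_nonneg Y))
    fun x hx => ?_
  let w : Fin m → EuclideanSpace ℂ (Fin m) := fun k => WithLp.toLp 2 (star ⇑(b k) * ⇑x)
  have hsplit : star ⇑x ⬝ᵥ (A ⊙ Y) *ᵥ ⇑x
      = ∑ k, (hA.eigenvalues k : ℂ) * (star ⇑(w k) ⬝ᵥ Y *ᵥ ⇑(w k)) := by
    conv_lhs => rw [hA.eq_sum_eigenvalues_smul_vecMulVec]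
    simp only [sum_hadamard, smul_hadamard, sum_mulVec, dotProduct_sum, smul_mulVec,
      dotProduct_smul, star_dotProduct_vecMulVec_hadamard_mulVec, smul_eq_mul]
    rfl
  have hw : ∑ k, ‖w k‖ ^ 2 = 1 := by
    simp only [w, EuclideanSpace.norm_sq_eq, Pi.mul_apply, Pi.star_apply, norm_mul, norm_star,
      mul_pow]
    rw [Finset.sum_comm]
    simp only [← Finset.sum_mul, b.sum_norm_sq_apply, one_mul, ← EuclideanSpace.norm_sq_eq, hx,
      one_pow]
  calc ‖star ⇑x ⬝ᵥ (A ⊙ Y) *ᵥ ⇑x‖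
      ≤ ∑ k, |hA.eigenvalues k| * ‖star ⇑(w k) ⬝ᵥ Y *ᵥ ⇑(w k)‖ := by
        rw [hsplit]
        refine (norm_sum_le _ _).trans_eq (Finset.sum_congr rfl fun k _ => ?_)
        rw [norm_mul, Complex.norm_real, Real.norm_eq_abs]
    _ ≤ ∑ k, numRadius A * (numRadius Y * ‖w k‖ ^ 2) := by
        refine Finset.sum_le_sum fun k _ => ?_
        exact mul_le_mul (hA.abs_eigenvalues_le_numRadius k)
          (norm_star_dotProduct_mulVec_le_numRadius_mul Y (w k)) (norm_nonneg _)
          (numRadius_nonneg A)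
    _ = numRadius A * numRadius Y := by
        rw [← Finset.mul_sum, ← Finset.mul_sum, hw, mul_one]

section Sector

variable {m : ℕ}

lemma isHermitian_reM (X : Matrix (Fin m) (Fin m) ℂ) : (reM X).IsHermitian := by
  ext i j
  simp [reM, add_comm, mul_add]

lemma isHermitian_imM (X : Matrix (Fin m) (Fin m) ℂ) : (imM X).IsHermitian := by
  ext i j
  simp only [imM, conjTranspose_apply, Matrix.smul_apply, Matrix.sub_apply, RCLike.star_def,
    smul_eq_mul, star_mul', star_div₀, star_neg, conj_I, neg_neg, star_ofNat, star_sub,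
    RingHomCompTriple.comp_apply, RingHom.id_apply]
  ring

lemma reM_add_I_smul_imM (X : Matrix (Fin m) (Fin m) ℂ) : reM X + I • imM X = X := by
  ext i j
  simp only [reM, imM, Matrix.add_apply, Matrix.smul_apply, Matrix.sub_apply,
    conjTranspose_apply, smul_eq_mul]
  linear_combination ((star (X j i) - X i j) / 2) * I_sq

lemma numRadius_imM_le_of_numRange_subset_sector {X : Matrix (Fin m) (Fin m) ℂ} {α : ℝ}
    (hα : 0 ≤ Real.tan α) (hX : numRange X ⊆ sector α) :
    numRadius (imM X) ≤ Real.tan α * numRadius (reM X) := by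
  refine numRadius_le_of_forall (mul_nonneg hα (numRadius_nonneg _)) fun x hx => ?_
  set a := star ⇑x ⬝ᵥ reM X *ᵥ ⇑x
  set b := star ⇑x ⬝ᵥ imM X *ᵥ ⇑x
  have ha : a = a.re :=
    Complex.ext rfl (by simpa using (isHermitian_reM X).im_star_dotProduct_mulVec_self x)
  have hb : b = b.re :=
    Complex.ext rfl (by simpa using (isHermitian_imM X).im_star_dotProduct_mulVec_self x)
  have hab : star ⇑x ⬝ᵥ X *ᵥ ⇑x = a + I * b := by
    conv_lhs => rw [← reM_add_I_smul_imM X]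
    rw [add_mulVec, dotProduct_add, smul_mulVec, dotProduct_smul, smul_eq_mul]
  obtain ⟨-, hsec⟩ := hX ⟨x, hx, hab.symm⟩
  have hre : (a + I * b).re = a.re := by rw [ha, hb]; simp
  have him : (a + I * b).im = b.re := by rw [ha, hb]; simp
  rw [hre, him] at hsec
  calc ‖b‖ = |b.re| := by rw [hb, Complex.norm_real, Real.norm_eq_abs, Complex.ofReal_re]
    _ ≤ Real.tan α * a.re := hsec
    _ ≤ Real.tan α * numRadius (reM X) := by
        gcongr
        exact (Complex.re_le_norm a).trans (norm_star_dotProduct_mulVec_le_numRadius _ hx)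

lemma numRadius_hadamard_le_of_numRange_subset_sector {X : Matrix (Fin m) (Fin m) ℂ} {α : ℝ}
    (hα : 0 ≤ Real.tan α) (hX : numRange X ⊆ sector α) (Y : Matrix (Fin m) (Fin m) ℂ) :
    numRadius (X ⊙ Y) ≤ (1 + Real.tan α) * numRadius (reM X) * numRadius Y := by
  have hY := numRadius_nonneg Y
  calc numRadius (X ⊙ Y) = numRadius (reM X ⊙ Y + I • (imM X ⊙ Y)) := by
        rw [← smul_hadamard, ← add_hadamard, reM_add_I_smul_imM]
    _ ≤ numRadius (reM X ⊙ Y) + numRadius (imM X ⊙ Y) := by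
        refine (numRadius_add_le _ _).trans (add_le_add le_rfl ?_)
        simpa using numRadius_smul_le I (imM X ⊙ Y)
    _ ≤ numRadius (reM X) * numRadius Y + Real.tan α * numRadius (reM X) * numRadius Y := by
        gcongr
        · exact (isHermitian_reM X).numRadius_hadamard_le Y
        · exact ((isHermitian_imM X).numRadius_hadamard_le Y).trans
            (by gcongr; exact numRadius_imM_le_of_numRange_subset_sector hα hX)
    _ = (1 + Real.tan α) * numRadius (reM X) * numRadius Y := by ring

end Sector

theorem numRadius_hadamard_le_min_tan {n : ℕ} (X Y : Matrix (Fin n) (Fin n) ℂ)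
    (α₁ α₂ : ℝ) (hα₁ : α₁ ∈ Set.Ico 0 (Real.pi / 2)) (hα₂ : α₂ ∈ Set.Ico 0 (Real.pi / 2))
    (hX : numRange X ⊆ sector α₁) (hY : numRange Y ⊆ sector α₂) :
    numRadius (X ⊙ Y) ≤
      min ((1 + Real.tan α₁) * numRadius (reM X) * numRadius Y)
          ((1 + Real.tan α₂) * numRadius X * numRadius (reM Y)) := by
  have htan₁ := Real.tan_nonneg_of_nonneg_of_le_pi_div_two hα₁.1 hα₁.2.le
  have htan₂ := Real.tan_nonneg_of_nonneg_of_le_pi_div_two hα₂.1 hα₂.2.le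
  refine le_min (numRadius_hadamard_le_of_numRange_subset_sector htan₁ hX Y) ?_
  rw [hadamard_comm, mul_right_comm]
  exact numRadius_hadamard_le_of_numRange_subset_sector htan₂ hY X
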